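/- arXiv:2105.13199 — 3 statements merged into one kernel-verified Lean document; each statement's English description precedes it below -/
import Mathlib

section
/- Let p₁, p₂ be continuous strictly positive probability densities on the circle [-π,π], let X have density p₁ with ∫ sin(x) p₁(x) dx = 0, let π₀ = p₂/p₁ be differentiable, and let τᶜ be the circular Stein kernel of p₁. Then the Wasserstein-1 distance between the laws with densities p₂ and p₁ is at least |∫_{-π}^{π} τᶜ(x) π₀'(x) p₁(x) dx|. -/
open Real MeasureTheory intervalIntegral Set
open scoped NNReal Interval

/-!
Write `F x = ∫_{-π}^x sin · p₁`, so that `τᶜ p₁ = -F` and `F (-π) = F π = 0` by the mean-angle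
condition. Integrating by parts, `∫ τᶜ π₀' p₁ = ∫ sin · π₀ p₁ = ∫ sin · p₂ - ∫ sin · p₁`, which is
the Wasserstein gap for the 1-Lipschitz test function `sin`. The supremum defining the distance is
a genuine (finite) supremum because the two densities have equal mass: subtracting `h (-π)` from a
1-Lipschitz `h` bounds every gap by `2π ∫ |p₂ - p₁|`.
-/

theorem intervalIntegral.integral_mul_deriv_eq_deriv_mul_of_integrable {a b : ℝ}
    {u v u' v' : ℝ → ℝ}
    (hu : ∀ x ∈ [[a, b]], HasDerivAt u (u' x) x) (hv : ∀ x ∈ [[a, b]], HasDerivAt v (v' x) x)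
    (hu'v : IntervalIntegrable (fun x => u' x * v x) volume a b)
    (huv' : IntervalIntegrable (fun x => u x * v' x) volume a b) :
    ∫ x in a..b, u x * v' x = u b * v b - u a * v a - ∫ x in a..b, u' x * v x := by
  have hftc := integral_eq_sub_of_hasDerivAt (f := fun x => u x * v x)
    (fun x hx => (hu x hx).mul (hv x hx)) (hu'v.add huv')
  rw [integral_add hu'v huv'] at hftc
  linarith

theorem abs_integral_mul_le_of_lipschitzWith {K : ℝ≥0} {h q : ℝ → ℝ} {a b : ℝ} (hab : a ≤ b)
    (hh : LipschitzWith K h) (hq : IntervalIntegrable q volume a b)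
    (hq₀ : ∫ x in a..b, q x = 0) :
    |∫ x in a..b, h x * q x| ≤ K * (b - a) * ∫ x in a..b, |q x| := by
  have hcentre : ∫ x in a..b, h x * q x = ∫ x in a..b, (h x - h a) * q x := by
    simp_rw [sub_mul]
    rw [intervalIntegral.integral_sub (hq.continuousOn_mul hh.continuous.continuousOn)
      (hq.const_mul _), intervalIntegral.integral_const_mul, hq₀, mul_zero, sub_zero]
  rw [hcentre, ← intervalIntegral.integral_const_mul]
  refine (abs_integral_le_integral_abs hab).trans (integral_mono_on hab ?_ ?_ fun x hx => ?_)
  · exact (hq.continuousOn_mul (hh.continuous.sub continuous_const).continuousOn).abs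
  · exact hq.abs.const_mul _
  · rw [abs_mul]
    refine mul_le_mul_of_nonneg_right ?_ (abs_nonneg _)
    calc |h x - h a| ≤ K * |x - a| := by simpa [Real.dist_eq] using hh.dist_le_mul x a
      _ ≤ K * (b - a) := by gcongr; rw [abs_of_nonneg] <;> linarith [hx.1, hx.2]

noncomputable def circularWasserstein (p₂ p₁ : ℝ → ℝ) : ℝ :=
  ⨆ h : {h : ℝ → ℝ // LipschitzWith 1 h},
    |(∫ x in (-π)..π, h.1 x * p₂ x) - ∫ x in (-π)..π, h.1 x * p₁ x|

theorem circularWasserstein_nonneg (p₂ p₁ : ℝ → ℝ) : 0 ≤ circularWasserstein p₂ p₁ :=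
  Real.iSup_nonneg fun _ => abs_nonneg _

theorem le_circularWasserstein {p₁ p₂ h : ℝ → ℝ}
    (hp₁ : IntervalIntegrable p₁ volume (-π) π) (hp₂ : IntervalIntegrable p₂ volume (-π) π)
    (hmass : ∫ x in (-π)..π, p₂ x = ∫ x in (-π)..π, p₁ x) (hh : LipschitzWith 1 h) :
    |(∫ x in (-π)..π, h x * p₂ x) - ∫ x in (-π)..π, h x * p₁ x| ≤
      circularWasserstein p₂ p₁ := by
  have hgap : ∀ g : ℝ → ℝ, LipschitzWith 1 g →
      (∫ x in (-π)..π, g x * p₂ x) - ∫ x in (-π)..π, g x * p₁ x =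
        ∫ x in (-π)..π, g x * (p₂ x - p₁ x) := fun g hg => by
    simp_rw [mul_sub]
    exact (integral_sub (hp₂.continuousOn_mul hg.continuous.continuousOn)
      (hp₁.continuousOn_mul hg.continuous.continuousOn)).symm
  -- without this bound the `⨆` would take the junk value `0`
  have hbdd : BddAbove (range fun g : {g : ℝ → ℝ // LipschitzWith 1 g} =>
      |(∫ x in (-π)..π, g.1 x * p₂ x) - ∫ x in (-π)..π, g.1 x * p₁ x|) := by
    refine ⟨1 * (π - -π) * ∫ x in (-π)..π, |p₂ x - p₁ x|, ?_⟩
    rintro _ ⟨⟨g, hg⟩, rfl⟩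
    dsimp only
    rw [hgap g hg]
    exact abs_integral_mul_le_of_lipschitzWith (by linarith [pi_pos]) hg (hp₂.sub hp₁)
      (by rw [integral_sub hp₂ hp₁, hmass, sub_self])
  exact le_ciSup hbdd ⟨h, hh⟩

noncomputable def circularSteinKernel (p : ℝ → ℝ) (x : ℝ) : ℝ :=
  -(1 / p x) * ∫ y in (-π)..x, sin y * p y

theorem integral_circularSteinKernel_mul_deriv_mul {p g : ℝ → ℝ} (hpc : Continuous p)
    (hp : ∀ x, p x ≠ 0) (hmean : ∫ x in (-π)..π, sin x * p x = 0) (hg : Differentiable ℝ g)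
    (hint : IntervalIntegrable (fun x => circularSteinKernel p x * deriv g x * p x) volume (-π) π) :
    ∫ x in (-π)..π, circularSteinKernel p x * deriv g x * p x =
      ∫ x in (-π)..π, sin x * g x * p x := by
  set F : ℝ → ℝ := fun x => ∫ y in (-π)..x, sin y * p y
  have hτ : ∀ x, circularSteinKernel p x * deriv g x * p x = -(F x * deriv g x) := fun x => by
    simp only [circularSteinKernel, F]
    field_simp [hp x]
  have hsinp : Continuous fun x => sin x * p x := continuous_sin.mul hpc
  have hF : ∀ x, HasDerivAt F (sin x * p x) x := fun x =>
    integral_hasDerivAt_right (hsinp.intervalIntegrable _ _)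
      (hsinp.stronglyMeasurableAtFilter _ _) hsinp.continuousAt
  simp_rw [hτ] at hint ⊢
  rw [intervalIntegral.integral_neg, integral_mul_deriv_eq_deriv_mul_of_integrable (fun x _ => hF x)
    (fun x _ => (hg x).hasDerivAt) ((hsinp.mul hg.continuous).intervalIntegrable _ _)
    (by simpa only [Pi.neg_def, neg_neg] using hint.neg)]
  have hFπ : F π = 0 := hmean
  simp only [hFπ, F, integral_same, zero_mul, sub_zero, zero_sub, neg_neg]
  exact integral_congr fun x _ => mul_right_comm _ _ _

theorem wasserstein_lower_bound_general
    (p₁ p₂ : ℝ → ℝ) (h₁c : Continuous p₁) (h₂c : Continuous p₂)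
    (h₁pos : ∀ x, 0 < p₁ x)
    (h₁prob : ∫ x in (-π)..π, p₁ x = 1) (h₂prob : ∫ x in (-π)..π, p₂ x = 1)
    (hmean : ∫ x in (-π)..π, Real.sin x * p₁ x = 0)
    (hπ₀ : Differentiable ℝ (fun x => p₂ x / p₁ x)) :
    |∫ x in (-π)..π,
        (-(1 / p₁ x) * ∫ y in (-π)..x, Real.sin y * p₁ y)
          * deriv (fun t => p₂ t / p₁ t) x * p₁ x|
      ≤ ⨆ h : {h : ℝ → ℝ // LipschitzWith 1 h},
          |(∫ x in (-π)..π, h.1 x * p₂ x) - ∫ x in (-π)..π, h.1 x * p₁ x| := by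
  change |∫ x in (-π)..π, circularSteinKernel p₁ x * deriv (fun t => p₂ t / p₁ t) x * p₁ x|
    ≤ circularWasserstein p₂ p₁
  by_cases hint : IntervalIntegrable
    (fun x => circularSteinKernel p₁ x * deriv (fun t => p₂ t / p₁ t) x * p₁ x) volume (-π) π
  · have hstein := integral_circularSteinKernel_mul_deriv_mul h₁c (fun x => (h₁pos x).ne') hmean
      hπ₀ hint
    have hsin : ∫ x in (-π)..π, sin x * (p₂ x / p₁ x) * p₁ x =
        (∫ x in (-π)..π, sin x * p₂ x) - ∫ x in (-π)..π, sin x * p₁ x := by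
      rw [hmean, sub_zero]
      exact integral_congr fun x _ => by field_simp [(h₁pos x).ne']
    rw [hstein, hsin]
    exact le_circularWasserstein (h₁c.intervalIntegrable _ _) (h₂c.intervalIntegrable _ _)
      (h₂prob.trans h₁prob.symm) lipschitzWith_sin
  · rw [intervalIntegral.integral_undef hint, abs_zero]
    exact circularWasserstein_nonneg p₂ p₁

/-- Lower bound on the Wasserstein-1 distance between two circular distributions
(Theorem 4.2, lower bound). -/
theorem wasserstein_lower_bound
    (p₁ p₂ : ℝ → ℝ) (h₁c : Continuous p₁) (h₂c : Continuous p₂)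
    (h₁pos : ∀ x, 0 < p₁ x) (h₂pos : ∀ x, 0 < p₂ x)
    (h₁prob : ∫ x in (-π)..π, p₁ x = 1) (h₂prob : ∫ x in (-π)..π, p₂ x = 1)
    (hmean : ∫ x in (-π)..π, Real.sin x * p₁ x = 0)
    (hπ₀ : Differentiable ℝ (fun x => p₂ x / p₁ x)) :
    |∫ x in (-π)..π,
        (-(1 / p₁ x) * ∫ y in (-π)..x, Real.sin y * p₁ y)
          * deriv (fun t => p₂ t / p₁ t) x * p₁ x|
      ≤ ⨆ h : {h : ℝ → ℝ // LipschitzWith 1 h},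
          |(∫ x in (-π)..π, h.1 x * p₂ x) - ∫ x in (-π)..π, h.1 x * p₁ x| :=
  wasserstein_lower_bound_general p₁ p₂ h₁c h₂c h₁pos h₁prob h₂prob hmean hπ₀
end

section
/- Let the wrapped normal density be written via the Jacobi triple product as p_WN(θ) = (1/2π) ∏_{n=1}^∞ (1 - e^{-σ²n})(1 + e^{-2σ²(n-1/2)} + 2cos(θ) e^{-σ²(n-1/2)}). Then its logarithmic derivative is (log p_WN)'(θ) = -∑_{n=1}^∞ sin(θ) / (cosh(σ²(n - 1/2)) + cos(θ)). -/
/-!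
Writing `b = exp (-s)`, each theta factor `1 + b ^ 2 + 2 b cos t = |1 + b e^{it}|²` is bounded below
by `(1 - |b|)²`, so its logarithmic derivative `-2 b sin t / (1 + b ^ 2 + 2 b cos t)` is `O(|b|)`
uniformly in `t`. With `b` summable, the logarithm of the product is the series of logarithms and
may be differentiated term by term; multiplying numerator and denominator by `exp s / 2` turns
each term into `-sin t / (cosh s + cos t)`.
-/

open Real

theorem hasDerivAt_log_mul_tprod {ι : Type*} {f g : ι → ℝ → ℝ} {u : ι → ℝ} {t₀ : ℝ}
    {c : ℝ} (hc : c ≠ 0) (hf_pos : ∀ i t, 0 < f i t)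
    (hf : ∀ i t, HasDerivAt (fun t => log (f i t)) (g i t) t)
    (hu : Summable u) (hg : ∀ i t, ‖g i t‖ ≤ u i)
    (hlog : Summable fun i => log (f i t₀)) (θ : ℝ) :
    HasDerivAt (fun t => log (c * ∏' i, f i t)) (∑' i, g i θ) θ := by
  have hsum : ∀ t, Summable fun i => log (f i t) :=
    summable_of_summable_hasDerivAt hu hf hg hlog
  have heq : (fun t => log (c * ∏' i, f i t)) = fun t => log c + ∑' i, log (f i t) := by
    funext t
    rw [← rexp_tsum_eq_tprod (hf_pos · t) (hsum t), log_mul hc (exp_ne_zero _), log_exp]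
  rw [heq]
  exact (hasDerivAt_tsum hu hf hg hlog θ).const_add _

/-- The factor `(1 + b z) (1 + b z⁻¹)` of the Jacobi triple product at `z = exp (i t)`. -/
noncomputable def tripleProductFactor (b t : ℝ) : ℝ := 1 + b ^ 2 + 2 * cos t * b

section TripleProductFactor

variable {b : ℝ}

theorem sq_one_sub_abs_le_tripleProductFactor (b t : ℝ) :
    (1 - |b|) ^ 2 ≤ tripleProductFactor b t := by
  have hcos : |cos t * b| ≤ |b| := by
    rw [abs_mul]; exact mul_le_of_le_one_left (abs_nonneg b) (abs_cos_le_one t)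
  unfold tripleProductFactor
  nlinarith [neg_abs_le (cos t * b), sq_abs b]

theorem tripleProductFactor_pos (hb : |b| < 1) (t : ℝ) : 0 < tripleProductFactor b t :=
  (pow_pos (sub_pos.2 hb) 2).trans_le (sq_one_sub_abs_le_tripleProductFactor b t)

theorem tripleProductFactor_pi (b : ℝ) : tripleProductFactor b π = (1 - b) ^ 2 := by
  simp only [tripleProductFactor, cos_pi]; ring

theorem hasDerivAt_tripleProductFactor (b t : ℝ) :
    HasDerivAt (tripleProductFactor b) (-(2 * b * sin t)) t := by
  have h := (((hasDerivAt_cos t).const_mul 2).mul_const b).const_add (1 + b ^ 2)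
  rw [show -(2 * b * sin t) = 2 * -sin t * b by ring]
  exact h

theorem abs_div_tripleProductFactor_le (hb : |b| < 1) (t : ℝ) :
    |2 * b * sin t / tripleProductFactor b t| ≤ 2 * |b| / (1 - |b|) ^ 2 := by
  rw [abs_div, abs_of_pos (tripleProductFactor_pos hb t), abs_mul, abs_mul, abs_two]
  exact div_le_div₀ (by positivity) (mul_le_of_le_one_right (by positivity) (abs_sin_le_one t))
    (pow_pos (sub_pos.2 hb) 2) (sq_one_sub_abs_le_tripleProductFactor b t)

theorem two_mul_exp_neg_mul_sin_div_tripleProductFactor (s θ : ℝ) :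
    2 * exp (-s) * sin θ / tripleProductFactor (exp (-s)) θ = sin θ / (cosh s + cos θ) := by
  have h : tripleProductFactor (exp (-s)) θ = 2 * exp (-s) * (cosh s + cos θ) := by
    rw [tripleProductFactor, cosh_eq, show exp s = (exp (-s))⁻¹ by rw [exp_neg, inv_inv]]
    field_simp
  rw [h, mul_div_mul_left _ _ (by positivity)]

theorem hasDerivAt_log_one_sub_mul_tripleProductFactor {a : ℝ} (ha : a < 1) (hb : |b| < 1)
    (t : ℝ) :
    HasDerivAt (fun t => log ((1 - a) * tripleProductFactor b t))
      (-(2 * b * sin t) / tripleProductFactor b t) t := by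
  have ha' : 1 - a ≠ 0 := (sub_pos.2 ha).ne'
  have h := ((hasDerivAt_tripleProductFactor b t).const_mul (1 - a)).log
    (mul_ne_zero ha' (tripleProductFactor_pos hb t).ne')
  rwa [mul_div_mul_left _ _ ha'] at h

end TripleProductFactor

theorem summable_two_mul_abs_div_sq_one_sub_abs {ι : Type*} {b : ι → ℝ} (hb : Summable b) :
    Summable fun i => 2 * |b i| / (1 - |b i|) ^ 2 := by
  -- once `|b i| ≤ 1 / 2`, the denominator is at least `1 / 4`
  refine (hb.abs.mul_left 8).of_norm_bounded_eventually ?_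
  filter_upwards [hb.abs.tendsto_cofinite_zero.eventually_le_const one_half_pos] with i hi
  have hquarter : (1 : ℝ) / 4 ≤ (1 - |b i|) ^ 2 := by nlinarith [abs_nonneg (b i)]
  rw [norm_of_nonneg (by positivity), div_le_iff₀ (by linarith)]
  nlinarith [abs_nonneg (b i)]

theorem hasDerivAt_log_mul_tprod_one_sub_mul_tripleProductFactor {ι : Type*} {a b : ι → ℝ}
    {c : ℝ} (hc : c ≠ 0) (ha : Summable a) (ha_lt : ∀ i, a i < 1) (hb : Summable b)
    (hb_lt : ∀ i, |b i| < 1) (θ : ℝ) :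
    HasDerivAt (fun t => log (c * ∏' i, (1 - a i) * tripleProductFactor (b i) t))
      (∑' i, -(2 * b i * sin θ) / tripleProductFactor (b i) θ) θ := by
  have hlog_pi : Summable fun i => log ((1 - a i) * tripleProductFactor (b i) π) := by
    have hlog_sub : ∀ {x : ι → ℝ}, Summable x → Summable fun i => log (1 - x i) := fun hx => by
      simpa only [sub_eq_add_neg] using Real.summable_log_one_add_of_summable hx.neg
    refine ((hlog_sub ha).add ((hlog_sub hb).mul_left 2)).congr fun i => ?_
    have hb1 : 0 < 1 - b i := sub_pos.2 (lt_of_abs_lt (hb_lt i))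
    rw [tripleProductFactor_pi, log_mul (sub_pos.2 (ha_lt i)).ne' (by positivity), log_pow]
    norm_num
  refine hasDerivAt_log_mul_tprod hc
    (fun i t => mul_pos (sub_pos.2 (ha_lt i)) (tripleProductFactor_pos (hb_lt i) t))
    (fun i => hasDerivAt_log_one_sub_mul_tripleProductFactor (ha_lt i) (hb_lt i))
    (summable_two_mul_abs_div_sq_one_sub_abs hb) (fun i t => ?_) hlog_pi θ
  rw [norm_eq_abs, neg_div, abs_neg]
  exact abs_div_tripleProductFactor_le (hb_lt i) t

/-- The logarithmic derivative of the wrapped normal density, written via the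
Jacobi triple product. -/
theorem wrapped_normal_log_deriv (σ : ℝ) (hσ : 0 < σ) (θ : ℝ) :
    deriv (fun t => Real.log ((1 / (2 * π)) *
        ∏' n : ℕ, (1 - Real.exp (-σ ^ 2 * ((n : ℝ) + 1)))
          * (1 + Real.exp (-2 * σ ^ 2 * (((n : ℝ) + 1) - 1 / 2))
            + 2 * Real.cos t * Real.exp (-σ ^ 2 * (((n : ℝ) + 1) - 1 / 2))))) θ
      = -∑' n : ℕ,
          Real.sin θ / (Real.cosh (σ ^ 2 * (((n : ℝ) + 1) - 1 / 2)) + Real.cos θ) := by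
  have hσ2 : -σ ^ 2 < 0 := neg_neg_of_pos (pow_pos hσ 2)
  have hexp_lt : ∀ {x : ℝ}, 0 < x → exp (-σ ^ 2 * x) < 1 := fun hx =>
    exp_lt_one_iff.2 (mul_neg_of_neg_of_pos hσ2 hx)
  have hsq : ∀ x : ℝ, exp (-2 * σ ^ 2 * x) = exp (-σ ^ 2 * x) ^ 2 := fun x => by
    rw [← exp_nat_mul]; ring_nf
  have h := hasDerivAt_log_mul_tprod_one_sub_mul_tripleProductFactor
    (a := fun n : ℕ => exp (-σ ^ 2 * ((n : ℝ) + 1)))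
    (b := fun n : ℕ => exp (-σ ^ 2 * (((n : ℝ) + 1) - 1 / 2)))
    (one_div_ne_zero (by positivity : 2 * π ≠ 0))
    (summable_exp_nat_mul_of_ge hσ2 fun n => by linarith)
    (fun n => hexp_lt (by positivity))
    (summable_exp_nat_mul_of_ge hσ2 fun n => by linarith)
    (fun n => by rw [abs_exp]; exact hexp_lt (by linarith [n.cast_nonneg (α := ℝ)])) θ
  simp only [tripleProductFactor, ← hsq] at h
  rw [h.deriv, ← tsum_neg]
  refine tsum_congr fun n => ?_
  rw [hsq, neg_div, ← two_mul_exp_neg_mul_sin_div_tripleProductFactor, tripleProductFactor]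
  simp only [neg_mul]
end

section
/- For every σ > 0 and every θ ∈ [-π, π], ∑_{n=1}^∞ 1/(cosh(σ²(n - 1/2)) + cos(θ)) ≤ π²/σ⁴, i.e. the series is maximized over θ at cos θ = -1 and there is bounded by π²/σ⁴. -/
/-!
Since `cos θ ≥ -1` and `cosh x - 1 ≥ x ^ 2 / 2`, the `n`-th term is at most
`2 / (σ ^ 4 (n + 1/2) ^ 2)`, and `∑ 1 / (n + 1/2) ^ 2 = π ^ 2 / 2`.
-/

open Real

lemma Real.one_add_sq_div_two_le_cosh (x : ℝ) : 1 + x ^ 2 / 2 ≤ cosh x := by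
  have h := sum_le_hasSum (Finset.range 2)
    (fun n _ => div_nonneg (pow_mul x 2 n ▸ by positivity) (by positivity)) (hasSum_cosh x)
  simpa [Finset.sum_range_succ] using h

lemma Real.cosh_add_pos {x c : ℝ} (hx : x ≠ 0) (hc : -1 ≤ c) : 0 < cosh x + c := by
  linarith [one_lt_cosh.2 hx]

lemma Real.one_div_cosh_add_le {x c : ℝ} (hx : x ≠ 0) (hc : -1 ≤ c) :
    1 / (cosh x + c) ≤ 2 / x ^ 2 := by
  have hcosh : x ^ 2 / 2 ≤ cosh x + c := by linarith [one_add_sq_div_two_le_cosh x]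
  calc 1 / (cosh x + c) ≤ 1 / (x ^ 2 / 2) := one_div_le_one_div_of_le (by positivity) hcosh
    _ = 2 / x ^ 2 := one_div_div _ _

/-- The even terms of `∑ 1 / n ^ 2 = π ^ 2 / 6` contribute a quarter of it, so the odd ones sum to
`π ^ 2 / 8`. -/
lemma hasSum_one_div_nat_add_half_sq :
    HasSum (fun n : ℕ => 1 / ((n : ℝ) + 1 / 2) ^ 2) (π ^ 2 / 2) := by
  set f : ℕ → ℝ := fun n => 1 / (n : ℝ) ^ 2
  have heven : HasSum (fun n => f (2 * n)) (π ^ 2 / 24) := by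
    have h := hasSum_zeta_two.mul_left (1 / 4)
    rw [show (1 / 4 : ℝ) * (π ^ 2 / 6) = π ^ 2 / 24 by ring] at h
    exact h.congr_fun fun n => by simp only [f, Nat.cast_mul, Nat.cast_ofNat]; ring
  have hodd : Summable (fun n => f (2 * n + 1)) :=
    hasSum_zeta_two.summable.comp_injective fun a b hab => by omega
  have hodd_sum : ∑' n, f (2 * n + 1) = π ^ 2 / 8 := by
    linarith [(heven.even_add_odd hodd.hasSum).unique hasSum_zeta_two]
  have h := hodd.hasSum.mul_left 4
  rw [hodd_sum, show (4 : ℝ) * (π ^ 2 / 8) = π ^ 2 / 2 by ring] at h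
  refine h.congr_fun fun n => ?_
  simp only [f, Nat.cast_add, Nat.cast_mul, Nat.cast_ofNat, Nat.cast_one]
  field_simp
  ring

theorem cosh_cos_series_bound_general (σ : ℝ) (hσ : 0 < σ) (θ : ℝ) :
    ∑' n : ℕ, 1 / (Real.cosh (σ ^ 2 * (((n : ℝ) + 1) - 1 / 2)) + Real.cos θ)
      ≤ π ^ 2 / σ ^ 4 := by
  simp_rw [add_sub_assoc, show (1 : ℝ) - 1 / 2 = 1 / 2 by norm_num]
  have hx (n : ℕ) : σ ^ 2 * ((n : ℝ) + 1 / 2) ≠ 0 := by positivity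
  have hdom : HasSum (fun n : ℕ => 2 / (σ ^ 2 * ((n : ℝ) + 1 / 2)) ^ 2) (π ^ 2 / σ ^ 4) := by
    have h := hasSum_one_div_nat_add_half_sq.mul_left (2 / σ ^ 4)
    rw [show 2 / σ ^ 4 * (π ^ 2 / 2) = π ^ 2 / σ ^ 4 by ring] at h
    refine h.congr_fun fun n => ?_
    have : (n : ℝ) + 1 / 2 ≠ 0 := by positivity
    field_simp
  have hterm n := one_div_cosh_add_le (hx n) (neg_one_le_cos θ)
  have hnonneg n := (one_div_pos.2 (cosh_add_pos (hx n) (neg_one_le_cos θ))).le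
  exact hasSum_le hterm (hdom.summable.of_nonneg_of_le hnonneg hterm).hasSum hdom

/-- Bound on the wrapped normal log-derivative series, uniformly in `θ`. -/
theorem cosh_cos_series_bound (σ : ℝ) (hσ : 0 < σ) (θ : ℝ)
    (hθ : θ ∈ Set.Icc (-π) π) :
    ∑' n : ℕ, 1 / (Real.cosh (σ ^ 2 * (((n : ℝ) + 1) - 1 / 2)) + Real.cos θ)
      ≤ π ^ 2 / σ ^ 4 :=
  cosh_cos_series_bound_general σ hσ θ
end
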